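/- Classical Poisson bracket identity on the sphere: in P one has {S₂², {S₁S₂, S₁S₃}} − (3/4)·{S₁², {S₁², S₂S₃}} = 2s²·S₂S₃. -/
import Mathlib


open MvPolynomial MeasureTheory

noncomputable section

attribute [local instance] Classical.propDecidable

/-- The Poisson bracket on `ℝ[X₀,X₁,X₂]` associated to the sphere:
`{f,g} = Σ εᵢⱼₖ Xᵢ ∂f/∂Xⱼ ∂g/∂Xₖ` (indices `0,1,2` play the role of `1,2,3`). -/
def pb (f g : MvPolynomial (Fin 3) ℝ) : MvPolynomial (Fin 3) ℝ :=
  X 0 * (pderiv 1 f * pderiv 2 g - pderiv 2 f * pderiv 1 g) +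
  X 1 * (pderiv 2 f * pderiv 0 g - pderiv 0 f * pderiv 2 g) +
  X 2 * (pderiv 0 f * pderiv 1 g - pderiv 1 f * pderiv 0 g)

/-- The ideal generated by `X₀² + X₁² + X₂² - s²`. -/
def sphereIdeal (s : ℝ) : Ideal (MvPolynomial (Fin 3) ℝ) :=
  Ideal.span {X 0 ^ 2 + X 1 ^ 2 + X 2 ^ 2 - C (s ^ 2)}

/-- The Poisson algebra `P` of polynomial functions on the sphere of radius `s`. -/
abbrev SpherePoly (s : ℝ) := MvPolynomial (Fin 3) ℝ ⧸ sphereIdeal s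

/-- The quotient map `ℝ[X₀,X₁,X₂] → P`. -/
def toSphere (s : ℝ) : MvPolynomial (Fin 3) ℝ →+* SpherePoly s :=
  Ideal.Quotient.mk (sphereIdeal s)

/-- The components `S₁, S₂, S₃` of the spin vector (indexed by `Fin 3`). -/
def S (s : ℝ) (i : Fin 3) : SpherePoly s := toSphere s (X i)

/-- A choice of polynomial representative of an element of `P`. -/
def rep (s : ℝ) (p : SpherePoly s) : MvPolynomial (Fin 3) ℝ :=
  (Ideal.Quotient.mk_surjective (I := sphereIdeal s) p).choose

/-- The Poisson bracket descended to `P`.  (It is independent of the choice of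
representatives, since the bracket of any polynomial with the generator
`X₀² + X₁² + X₂² - s²` vanishes identically.) -/
def pbS (s : ℝ) (p q : SpherePoly s) : SpherePoly s :=
  toSphere s (pb (rep s p) (rep s q))

/- Auxiliary lemmas -/

lemma rep_spec (s : ℝ) (p : SpherePoly s) : toSphere s (rep s p) = p :=
  (Ideal.Quotient.mk_surjective (I := sphereIdeal s) p).choose_spec

lemma pb_sub_left (f f' g : MvPolynomial (Fin 3) ℝ) :
    pb (f - f') g = pb f g - pb f' g := by
  simp only [pb, map_sub]; ring

lemma pb_sub_right (f g g' : MvPolynomial (Fin 3) ℝ) :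
    pb f (g - g') = pb f g - pb f g' := by
  simp only [pb, map_sub]; ring

lemma pb_mul_left (u v g : MvPolynomial (Fin 3) ℝ) :
    pb (u * v) g = u * pb v g + v * pb u g := by
  simp only [pb, pderiv_mul]; ring

lemma pb_sphere_left (s : ℝ) (g : MvPolynomial (Fin 3) ℝ) :
    pb (X 0 ^ 2 + X 1 ^ 2 + X 2 ^ 2 - C (s ^ 2)) g = 0 := by
  simp only [pb, map_add, map_sub, pderiv_C, pderiv_pow, pderiv_X]
  simp [Pi.single_apply]
  ring

lemma pb_antisymm (f g : MvPolynomial (Fin 3) ℝ) : pb f g = - pb g f := by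
  simp only [pb]; ring

lemma pb_mem_left (s : ℝ) {a : MvPolynomial (Fin 3) ℝ} (ha : a ∈ sphereIdeal s)
    (g : MvPolynomial (Fin 3) ℝ) : pb a g ∈ sphereIdeal s := by
  obtain ⟨u, rfl⟩ := Ideal.mem_span_singleton'.mp ha
  rw [pb_mul_left, pb_sphere_left, mul_zero, zero_add]
  exact Ideal.mem_span_singleton'.mpr ⟨pb u _, mul_comm _ _⟩

lemma pb_mem_right (s : ℝ) (f : MvPolynomial (Fin 3) ℝ) {a : MvPolynomial (Fin 3) ℝ}
    (ha : a ∈ sphereIdeal s) : pb f a ∈ sphereIdeal s := by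
  rw [pb_antisymm]
  exact (sphereIdeal s).neg_mem (pb_mem_left s ha f)

lemma pbS_mk (s : ℝ) (f g : MvPolynomial (Fin 3) ℝ) :
    pbS s (toSphere s f) (toSphere s g) = toSphere s (pb f g) := by
  have hf : rep s (toSphere s f) - f ∈ sphereIdeal s := by
    rw [← Ideal.Quotient.eq]; exact rep_spec s (toSphere s f)
  have hg : rep s (toSphere s g) - g ∈ sphereIdeal s := by
    rw [← Ideal.Quotient.eq]; exact rep_spec s (toSphere s g)
  show Ideal.Quotient.mk _ _ = Ideal.Quotient.mk _ _
  rw [Ideal.Quotient.eq]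
  have h : pb (rep s (toSphere s f)) (rep s (toSphere s g)) - pb f g =
      pb (rep s (toSphere s f) - f) (rep s (toSphere s g)) +
        pb f (rep s (toSphere s g) - g) := by
    rw [pb_sub_left, pb_sub_right]; ring
  rw [h]
  exact Ideal.add_mem _ (pb_mem_left s hf _) (pb_mem_right s f hg)

lemma smul_toSphere (s r : ℝ) (p : MvPolynomial (Fin 3) ℝ) :
    r • toSphere s p = toSphere s (C r * p) := by
  rw [← smul_eq_C_mul]
  exact (Submodule.Quotient.mk_smul (sphereIdeal s) r p).symm

lemma pderiv_two (i : Fin 3) : pderiv i (2 : MvPolynomial (Fin 3) ℝ) = 0 := by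
  rw [show (2 : MvPolynomial (Fin 3) ℝ) = C 2 from (map_ofNat C 2).symm]
  exact pderiv_C

lemma hE : pb (X 0 ^ 2) (pb (X 0 ^ 2) (X 1 * X 2)) =
    C (-16 : ℝ) * (X 0 ^ 2 * (X 1 * X 2)) := by
  simp only [pb, pderiv_mul, pderiv_pow, pderiv_X, pderiv_C, map_sub, map_add, map_mul,
    Nat.cast_ofNat, pderiv_two]
  simp [Pi.single_apply, map_neg, map_ofNat]
  ring

/-- Classical identity:
`{S₂², {S₁S₂, S₁S₃}} - (3/4) {S₁², {S₁², S₂S₃}} = 2 s² S₂S₃` in `P`. -/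
theorem bracket_identity_quadratic' (s : ℝ) (hs : 0 < s) :
    pbS s (S s 1 ^ 2) (pbS s (S s 0 * S s 1) (S s 0 * S s 2))
      - (3 / 4 : ℝ) • pbS s (S s 0 ^ 2) (pbS s (S s 0 ^ 2) (S s 1 * S s 2))
      = (2 * s ^ 2) • (S s 1 * S s 2) := by
  have hmap : ∀ f g : MvPolynomial (Fin 3) ℝ, toSphere s f * toSphere s g = toSphere s (f * g) :=
    fun f g => (map_mul _ _ _).symm
  have hpow : ∀ f : MvPolynomial (Fin 3) ℝ, toSphere s f ^ 2 = toSphere s (f ^ 2) :=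
    fun f => (map_pow _ _ _).symm
  simp only [S, hmap, hpow, pbS_mk, hE, smul_toSphere]
  rw [← mul_assoc, show (C ((3:ℝ)/4) : MvPolynomial (Fin 3) ℝ) * C (-16 : ℝ) = C (-12 : ℝ) by
    rw [← map_mul]; norm_num]
  show Ideal.Quotient.mk _ _ - Ideal.Quotient.mk _ _ = Ideal.Quotient.mk _ _
  rw [← map_sub, Ideal.Quotient.eq]
  refine Ideal.mem_span_singleton'.mpr ⟨C 2 * (X 1 * X 2), ?_⟩
  simp only [pb, pderiv_mul, pderiv_pow, pderiv_X, pderiv_C, map_sub, map_add, map_mul,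
    Nat.cast_ofNat, pderiv_two, map_pow, map_ofNat, map_neg]
  simp [Pi.single_apply]
  ring

end
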